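/- arXiv:1207.1961 — 5 statements merged into one kernel-verified Lean document; each statement's English description precedes it below -/
import Mathlib

section
/- The complete graph K₃ has no oriented perfect path double cover. -/
/-!
`K₃` has six arcs and each of the three paths of an OPPDC has at most two, so every path is
Hamiltonian. A Hamiltonian path of the triangle runs round it in one direction, so it uses either
none or two of the three forward arcs `v → v + 1`. As every forward arc lies on exactly one path,
`3` would be even.
-/

/-- An oriented perfect path double cover: for each vertex `v`, a directed path
`P v` (a nonempty list of distinct vertices, consecutive ones adjacent) starting
at `v`, such that each vertex is the end of exactly one path, and each arc of the
symmetric orientation lies in exactly one path. -/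
def HasOPPDC {V : Type*} (G : SimpleGraph V) : Prop :=
  ∃ P : V → List V,
    (∀ v, P v ≠ [] ∧ (P v).Nodup ∧ (P v).Chain' G.Adj ∧ (P v).head? = some v) ∧
    (∀ w : V, ∃! v, (P v).getLast? = some w) ∧
    (∀ a b : V, G.Adj a b → ∃! v, (a, b) ∈ (P v).zip (P v).tail)

open Finset

namespace List

variable {α : Type*} [DecidableEq α]

def arcs (l : List α) : Finset (α × α) := (l.zip l.tail).toFinset

@[simp]
theorem mem_arcs {l : List α} {p : α × α} : p ∈ l.arcs ↔ p ∈ l.zip l.tail :=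
  mem_toFinset

theorem card_arcs_le (l : List α) : #l.arcs ≤ l.length - 1 :=
  (toFinset_card_le _).trans (by simp)

end List

variable {V : Type*} [Fintype V] [DecidableEq V]

theorem card_eq_sum_card_arcs_inter {G : SimpleGraph V} (P : V → List V)
    (hcover : ∀ a b : V, G.Adj a b → ∃! v, (a, b) ∈ (P v).zip (P v).tail)
    (S : Finset (V × V)) (hS : ∀ p ∈ S, G.Adj p.1 p.2) :
    #S = ∑ v, #((P v).arcs ∩ S) := by
  have hunion : S = univ.biUnion fun v => (P v).arcs ∩ S := by
    ext p
    simp only [mem_biUnion, mem_univ, true_and, mem_inter, List.mem_arcs]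
    refine ⟨fun hp => ?_, fun ⟨_, _, hp⟩ => hp⟩
    obtain ⟨v, hv, -⟩ := hcover p.1 p.2 (hS p hp)
    exact ⟨v, hv, hp⟩
  have hdisj : ((univ : Finset V) : Set V).PairwiseDisjoint fun v => (P v).arcs ∩ S := by
    intro v _ w _ hvw
    refine disjoint_left.mpr fun p hpv hpw => hvw ?_
    simp only [mem_inter, List.mem_arcs] at hpv hpw
    exact (hcover p.1 p.2 (hS p hpv.2)).unique hpv.1 hpw.1
  rw [← card_biUnion hdisj, ← hunion]

theorem length_eq_card_of_covers_complete (P : V → List V) (hne : ∀ v, P v ≠ [])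
    (hnodup : ∀ v, (P v).Nodup)
    (hcover : ∀ a b : V, a ≠ b → ∃ v, (a, b) ∈ (P v).zip (P v).tail) (v : V) :
    (P v).length = Fintype.card V := by
  have hle : ∀ w, (P w).length ≤ Fintype.card V := fun w => (hnodup w).length_le_card
  refine (hle v).antisymm (not_lt.mp fun hlt => ?_)
  have hsub : (univ : Finset V).offDiag ⊆ univ.biUnion fun w => (P w).arcs := by
    intro p hp
    obtain ⟨w, hw⟩ := hcover p.1 p.2 (mem_offDiag.mp hp).2.2
    exact mem_biUnion.mpr ⟨w, mem_univ w, List.mem_arcs.mpr hw⟩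
  have hpos : ∀ w, 0 < (P w).length := fun w => List.length_pos_iff.mpr (hne w)
  have := calc Fintype.card V * Fintype.card V - Fintype.card V
      = #(univ : Finset V).offDiag := by rw [offDiag_card, card_univ]
    _ ≤ ∑ w, #(P w).arcs := (card_le_card hsub).trans card_biUnion_le
    _ ≤ ∑ w, ((P w).length - 1) := sum_le_sum fun w _ => (P w).card_arcs_le
    _ < ∑ _w : V, (Fintype.card V - 1) := by
      refine sum_lt_sum (fun w _ => by have := hle w; omega) ⟨v, mem_univ v, ?_⟩
      have := hpos v; omega
  simp only [sum_const, card_univ, smul_eq_mul] at this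
  rw [Nat.mul_sub_one] at this
  omega

def forwardArcs : Finset (Fin 3 × Fin 3) := univ.image fun v => (v, v + 1)

theorem even_card_arcs_inter_forwardArcs {l : List (Fin 3)} (hnodup : l.Nodup)
    (hlen : l.length = 3) : Even #(l.arcs ∩ forwardArcs) := by
  match l, hlen with
  | [a, b, c], _ => revert a b c; decide

/-- K₃ has no oriented perfect path double cover. -/
theorem K3_no_OPPDC : ¬ HasOPPDC (⊤ : SimpleGraph (Fin 3)) := by
  rintro ⟨P, hpath, -, hcover⟩
  have hlen : ∀ v, (P v).length = 3 := length_eq_card_of_covers_complete P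
    (fun v => (hpath v).1) (fun v => (hpath v).2.1) (fun a b hab => (hcover a b hab).exists)
  have hforward : #forwardArcs = ∑ v, #((P v).arcs ∩ forwardArcs) :=
    card_eq_sum_card_arcs_inter P hcover forwardArcs (by decide)
  have heven : Even #forwardArcs := hforward ▸ even_sum _ fun v _ =>
    even_card_arcs_inter_forwardArcs (hpath v).2.1 (hlen v)
  exact absurd heven (by decide)
end

section
/- The complete graph K₅ has no oriented perfect path double cover. -/
/-! A path with distinct vertices in `K₅` has at most four arcs, while the five paths of an
OPPDC must together cover all twenty arcs of the symmetric orientation; hence every path is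
Hamiltonian, and the uniqueness of the covering path makes the five paths pairwise
arc-disjoint. An exhaustive search shows that no five pairwise arc-disjoint Hamiltonian paths
start at the five vertices of `K₅`. -/

theorem List.IsChain.rel_of_mem_consecutivePairs {α : Type*} {R : α → α → Prop} {l : List α}
    (hl : l.IsChain R) {a b : α} (hab : (a, b) ∈ l.consecutivePairs) : R a b := by
  induction l using List.twoStepInduction with
  | nil | singleton => simp [List.consecutivePairs] at hab
  | cons_cons x y t _ ih =>
    rw [List.isChain_cons_cons] at hl
    rcases List.mem_cons.1 hab with hxy | hab
    · obtain ⟨rfl, rfl⟩ := Prod.mk.inj hxy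
      exact hl.1
    · exact ih y hl.2 hab

theorem List.Nodup.perm_finRange {n : ℕ} {p : List (Fin n)} (hnd : p.Nodup)
    (hlen : p.length = n) : p.Perm (List.finRange n) := by
  classical
  have huniv : p.toFinset = Finset.univ :=
    Finset.eq_univ_of_card _ (by rw [List.toFinset_card_of_nodup hnd, hlen, Fintype.card_fin])
  exact (List.perm_ext_iff_of_nodup hnd (List.nodup_finRange n)).2 fun a => by
    simp [← List.mem_toFinset, huniv]

section OPPDC

variable {V : Type*}

theorem length_eq_card_of_forall_mem_consecutivePairs [Fintype V] {P : V → List V}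
    (hne : ∀ v, P v ≠ []) (hnd : ∀ v, (P v).Nodup)
    (hcover : ∀ a b, a ≠ b → ∃ v, (a, b) ∈ (P v).consecutivePairs) (v : V) :
    (P v).length = Fintype.card V := by
  classical
  set n := Fintype.card V
  have hle : ∀ w, (P w).length - 1 ≤ n - 1 :=
    fun w => Nat.sub_le_sub_right (hnd w).length_le_card 1
  have hsub : (Finset.univ : Finset V).offDiag ⊆
      Finset.univ.biUnion fun w => (P w).consecutivePairs.toFinset := by
    rintro ⟨a, b⟩ hab
    obtain ⟨w, hw⟩ := hcover a b (Finset.mem_offDiag.1 hab).2.2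
    exact Finset.mem_biUnion.2 ⟨w, Finset.mem_univ w, List.mem_toFinset.2 hw⟩
  have hsum : ∑ w, ((P w).length - 1) = ∑ _w : V, (n - 1) := by
    refine le_antisymm (Finset.sum_le_sum fun w _ => hle w) ?_
    calc ∑ _w : V, (n - 1)
        = (Finset.univ : Finset V).offDiag.card := by
          simp [Finset.offDiag_card, Nat.mul_sub_one, n]
      _ ≤ (Finset.univ.biUnion fun w => (P w).consecutivePairs.toFinset).card :=
          Finset.card_le_card hsub
      _ ≤ ∑ w, (P w).consecutivePairs.toFinset.card := Finset.card_biUnion_le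
      _ ≤ ∑ w, ((P w).length - 1) :=
          Finset.sum_le_sum fun w _ => (List.toFinset_card_le _).trans (by simp)
  have hv := (Finset.sum_eq_sum_iff_of_le fun w _ => hle w).1 hsum v (Finset.mem_univ v)
  have := List.length_pos_iff.2 (hne v)
  have := (hnd v).length_le_card
  omega

def ArcDisjoint (p q : List V) : Prop :=
  ∀ e ∈ p.consecutivePairs, e ∉ q.consecutivePairs

instance [DecidableEq V] (p q : List V) : Decidable (ArcDisjoint p q) :=
  inferInstanceAs (Decidable (∀ e ∈ p.consecutivePairs, e ∉ q.consecutivePairs))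

theorem arcDisjoint_of_existsUnique {G : SimpleGraph V} {P : V → List V}
    (hchain : ∀ v, (P v).IsChain G.Adj)
    (harc : ∀ a b, G.Adj a b → ∃! v, (a, b) ∈ (P v).consecutivePairs)
    {v w : V} (hvw : v ≠ w) : ArcDisjoint (P v) (P w) := by
  rintro ⟨a, b⟩ hv hw
  exact hvw ((harc a b ((hchain v).rel_of_mem_consecutivePairs hv)).unique hv hw)

end OPPDC

def hamPathsFrom {n : ℕ} (v : Fin n) : List (List (Fin n)) :=
  (List.finRange n).permutations'.filter (·.head? = some v)

theorem mem_hamPathsFrom {n : ℕ} {v : Fin n} {p : List (Fin n)} :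
    p ∈ hamPathsFrom v ↔ p.Perm (List.finRange n) ∧ p.head? = some v := by
  simp [hamPathsFrom, List.mem_permutations']

-- Each `ArcDisjoint` test is placed right after the path it involves, so that `decide`
-- abandons a partial choice of paths as soon as two of them share an arc.
theorem no_five_arcDisjoint_hamPaths :
    ∀ p₀ ∈ hamPathsFrom (0 : Fin 5), ∀ p₁ ∈ hamPathsFrom (1 : Fin 5), ArcDisjoint p₀ p₁ →
    ∀ p₂ ∈ hamPathsFrom (2 : Fin 5), ArcDisjoint p₀ p₂ → ArcDisjoint p₁ p₂ →
    ∀ p₃ ∈ hamPathsFrom (3 : Fin 5), ArcDisjoint p₀ p₃ → ArcDisjoint p₁ p₃ → ArcDisjoint p₂ p₃ →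
    ∀ p₄ ∈ hamPathsFrom (4 : Fin 5), ArcDisjoint p₀ p₄ → ArcDisjoint p₁ p₄ → ArcDisjoint p₂ p₄ →
      ArcDisjoint p₃ p₄ → False := by
  decide +kernel

/-- K₅ has no oriented perfect path double cover. -/
theorem K5_no_OPPDC : ¬ HasOPPDC (⊤ : SimpleGraph (Fin 5)) := by
  rintro ⟨P, hpath, -, harc⟩
  have hlen := length_eq_card_of_forall_mem_consecutivePairs (fun v => (hpath v).1)
    (fun v => (hpath v).2.1) fun a b hab => (harc a b hab).exists
  have hham (v : Fin 5) : P v ∈ hamPathsFrom v :=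
    mem_hamPathsFrom.2 ⟨(hpath v).2.1.perm_finRange (by simpa using hlen v), (hpath v).2.2.2⟩
  have hdisj {v w : Fin 5} (hvw : v ≠ w) : ArcDisjoint (P v) (P w) :=
    arcDisjoint_of_existsUnique (fun v => (hpath v).2.2.1) harc hvw
  exact no_five_arcDisjoint_hamPaths _ (hham 0) _ (hham 1) (hdisj (by decide))
    _ (hham 2) (hdisj (by decide)) (hdisj (by decide))
    _ (hham 3) (hdisj (by decide)) (hdisj (by decide)) (hdisj (by decide))
    _ (hham 4) (hdisj (by decide)) (hdisj (by decide)) (hdisj (by decide)) (hdisj (by decide))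
end

section
/- If G = G₁ ∪ G₂ with V(G₁) ∩ V(G₂) = {v}, and both G₁ and G₂ have an oriented perfect path double cover, then G has an oriented perfect path double cover. -/
namespace List

variable {α β : Type*}

theorem consecutivePairs_map (f : α → β) (l : List α) :
    (l.map f).consecutivePairs = l.consecutivePairs.map (Prod.map f f) := by
  simp [consecutivePairs, ← map_tail, zip_map]

theorem IsChain.rel_of_mem_consecutivePairs_s4 {R : α → α → Prop} :
    ∀ {l : List α}, l.IsChain R → ∀ {a b : α}, (a, b) ∈ l.consecutivePairs → R a b
  | [], _, _, _, h => by simp at h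
  | [_], _, _, _, h => by simp [consecutivePairs] at h
  | x :: y :: l, hl, a, b, h => by
    rw [isChain_cons_cons] at hl
    simp only [consecutivePairs, tail_cons, zip_cons_cons, mem_cons, Prod.mk.injEq] at h
    rcases h with ⟨rfl, rfl⟩ | h
    · exact hl.1
    · exact hl.2.rel_of_mem_consecutivePairs_s4 h

theorem consecutivePairs_append_tail :
    ∀ {l₁ l₂ : List α}, l₁.getLast? = l₂.head? →
      (l₁ ++ l₂.tail).consecutivePairs = l₁.consecutivePairs ++ l₂.consecutivePairs
  | [], l₂, h => by cases l₂ <;> simp_all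
  | [a], l₂, h => by cases l₂ <;> simp_all
  | a :: b :: l, l₂, h => by
    have ih := consecutivePairs_append_tail (l₁ := b :: l) (l₂ := l₂) (by simpa using h)
    simp_all [consecutivePairs]

theorem getLast?_append_tail {l₁ l₂ : List α} (h : l₁.getLast? = l₂.head?) :
    (l₁ ++ l₂.tail).getLast? = l₂.getLast? := by
  rcases l₂ with _ | ⟨x, _ | ⟨y, t⟩⟩ <;> simp_all [getLast?_eq_getLast_of_ne_nil]

theorem head?_append_tail {l₁ l₂ : List α} (h : l₁.getLast? = l₂.head?) :
    (l₁ ++ l₂.tail).head? = l₁.head? := by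
  rcases l₁ with _ | ⟨x, t⟩ <;> cases l₂ <;> simp_all

theorem IsChain.append_tail {R : α → α → Prop} {l₁ l₂ : List α} (h₁ : l₁.IsChain R)
    (h₂ : l₂.IsChain R) (h : l₁.getLast? = l₂.head?) : (l₁ ++ l₂.tail).IsChain R := by
  rcases l₂ with _ | ⟨x, t⟩
  · simpa using h₁
  · rw [List.isChain_cons] at h₂
    refine h₁.append h₂.2 fun a ha b hb => ?_
    simp_all

theorem Nodup.append_tail {l₁ l₂ : List α} (h₁ : l₁.Nodup) (h₂ : l₂.Nodup)
    (h : ∀ x ∈ l₁, x ∈ l₂ → l₂.head? = some x) : (l₁ ++ l₂.tail).Nodup := by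
  rcases l₂ with _ | ⟨y, t⟩
  · simpa using h₁
  · rw [nodup_cons] at h₂
    refine nodup_append.2 ⟨h₁, h₂.2, ?_⟩
    rintro x hx₁ x' hx₂ rfl
    obtain rfl : y = x := by simpa using h x hx₁ (mem_cons_of_mem y hx₂)
    exact h₂.1 hx₂

end List

theorem Set.existsUnique_subtype_iff {α : Type*} {s : Set α} {p : α → Prop} :
    (∃! x : s, p x) ↔ ∃! x, x ∈ s ∧ p x := by
  constructor
  · rintro ⟨⟨x, hx⟩, hp, huniq⟩
    exact ⟨x, ⟨hx, hp⟩, fun y ⟨hy, hpy⟩ => congrArg Subtype.val (huniq ⟨y, hy⟩ hpy)⟩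
  · rintro ⟨x, ⟨hx, hp⟩, huniq⟩
    exact ⟨⟨x, hx⟩, hp, fun y hy => Subtype.ext (huniq y ⟨y.2, hy⟩)⟩

/-- If `v` is the only common point of `s` and `t`, the index `v ∈ s` can be handed over to
`u ∈ t` while the indices in `s \ t` are kept. -/
theorem Set.existsUnique_replace_of_inter_eq_singleton {α : Type*} {s t : Set α} {u v : α}
    {p : α → Prop} (hst : s ∩ t = {v}) (hu : u ∈ t) (h : ∃! w, w ∈ s ∧ p w) :
    ∃! w, w ∈ s ∪ t ∧ ((w = u ∧ p v) ∨ (w ∉ t ∧ p w)) := by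
  obtain ⟨w, ⟨hws, hpw⟩, huniq⟩ := h
  have hv : v ∈ s ∩ t := hst ▸ rfl
  by_cases hwv : w = v
  · subst hwv
    refine ⟨u, ⟨Or.inr hu, Or.inl ⟨rfl, hpw⟩⟩, ?_⟩
    rintro y ⟨hy, ⟨rfl, -⟩ | ⟨hyt, hpy⟩⟩
    · rfl
    · exact absurd (huniq y ⟨hy.resolve_right hyt, hpy⟩ ▸ hv.2) hyt
  · have hwt : w ∉ t := fun hwt => hwv (Set.eq_of_mem_singleton (hst ▸ ⟨hws, hwt⟩))
    refine ⟨w, ⟨Or.inl hws, Or.inr ⟨hwt, hpw⟩⟩, ?_⟩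
    rintro y ⟨hy, ⟨rfl, hpv⟩ | ⟨hyt, hpy⟩⟩
    · exact absurd (huniq v ⟨hv.1, hpv⟩).symm hwv
    · exact huniq y ⟨hy.resolve_right hyt, hpy⟩

namespace SimpleGraph.Subgraph

variable {V : Type*} {G : SimpleGraph V}

/-- An OPPDC of `H` given by paths `P w` for `w ∈ H.verts`; the values of `P` outside `H.verts`
play no role. -/
structure IsOPPDC (H : G.Subgraph) (P : V → List V) : Prop where
  isChain : ∀ w ∈ H.verts, (P w).IsChain H.Adj
  nodup : ∀ w ∈ H.verts, (P w).Nodup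
  head?_eq : ∀ w ∈ H.verts, (P w).head? = some w
  existsUnique_getLast? : ∀ z ∈ H.verts, ∃! w, w ∈ H.verts ∧ (P w).getLast? = some z
  existsUnique_mem_consecutivePairs :
    ∀ a b, H.Adj a b → ∃! w, w ∈ H.verts ∧ (a, b) ∈ (P w).consecutivePairs

theorem mem_verts_of_isChain {H : G.Subgraph} {l : List V} (hl : l.IsChain H.Adj)
    (hhead : ∀ a ∈ l.head?, a ∈ H.verts) {x : V} (hx : x ∈ l) : x ∈ H.verts := by
  obtain ⟨l₁, l₂, rfl⟩ := List.mem_iff_append.mp hx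
  rcases l₁.eq_nil_or_concat with rfl | ⟨L, a, rfl⟩
  · simpa using hhead
  · exact H.edge_vert (List.isChain_iff_forall_rel_of_append_cons_cons.mp hl
      (show _ = L ++ a :: x :: l₂ by simp)).symm

namespace IsOPPDC

variable {H : G.Subgraph} {P : V → List V} {w : V}

theorem mem_verts (h : H.IsOPPDC P) (hw : w ∈ H.verts) {x : V} (hx : x ∈ P w) : x ∈ H.verts :=
  mem_verts_of_isChain (h.isChain w hw) (by simp [h.head?_eq w hw, hw]) hx

theorem mem_verts_of_getLast?_eq (h : H.IsOPPDC P) (hw : w ∈ H.verts) {z : V}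
    (hz : (P w).getLast? = some z) : z ∈ H.verts :=
  h.mem_verts hw (List.mem_of_getLast? hz)

theorem adj_of_mem_consecutivePairs (h : H.IsOPPDC P) (hw : w ∈ H.verts) {a b : V}
    (hab : (a, b) ∈ (P w).consecutivePairs) : H.Adj a b :=
  (h.isChain w hw).rel_of_mem_consecutivePairs_s4 hab

end IsOPPDC

theorem _root_.HasOPPDC.exists_isOPPDC {H : G.Subgraph} (h : HasOPPDC H.coe) :
    ∃ P : V → List V, H.IsOPPDC P := by
  classical
  obtain ⟨P, hpath, hend, harc⟩ := h
  let Q : V → List V := fun w => if hw : w ∈ H.verts then (P ⟨w, hw⟩).map Subtype.val else []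
  have hQ (w : H.verts) : Q w = (P w).map Subtype.val := dif_pos w.2
  refine ⟨Q, fun w hw => ?_, fun w hw => ?_, fun w hw => ?_, fun z hz => ?_, fun a b hab => ?_⟩
  · rw [hQ ⟨w, hw⟩, List.isChain_map]
    exact (hpath ⟨w, hw⟩).2.2.1
  · rw [hQ ⟨w, hw⟩]
    exact (hpath _).2.1.map Subtype.val_injective
  · rw [hQ ⟨w, hw⟩, List.head?_map, (hpath _).2.2.2]
    rfl
  · rw [← Set.existsUnique_subtype_iff]
    refine (existsUnique_congr fun w => ?_).mp (hend ⟨z, hz⟩)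
    rw [hQ w, List.getLast?_map]
    exact ((Option.map_injective Subtype.val_injective).eq_iff (b := some ⟨z, hz⟩)).symm
  · rw [← Set.existsUnique_subtype_iff]
    refine (existsUnique_congr fun w => ?_).mp
      (harc ⟨a, H.edge_vert hab⟩ ⟨b, H.edge_vert hab.symm⟩ hab)
    rw [hQ w, List.consecutivePairs_map]
    exact (List.mem_map_of_injective
      (Subtype.val_injective.prodMap Subtype.val_injective)).symm

theorem hasOPPDC_of_isOPPDC_top {P : V → List V} (h : (⊤ : G.Subgraph).IsOPPDC P) :
    HasOPPDC G := by
  refine ⟨P, fun w => ?_, fun z => ?_, fun a b hab => ?_⟩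
  · have hhead := h.head?_eq w trivial
    exact ⟨fun hnil => by simp [hnil] at hhead, h.nodup w trivial, h.isChain w trivial, hhead⟩
  · simpa using h.existsUnique_getLast? z trivial
  · simpa using h.existsUnique_mem_consecutivePairs a b hab

theorem not_adj_of_adj_of_subsingleton_inter {H₁ H₂ : G.Subgraph}
    (h : (H₁.verts ∩ H₂.verts).Subsingleton) {a b : V} (hab : H₁.Adj a b) : ¬H₂.Adj a b :=
  fun hab₂ => hab.ne (h ⟨H₁.edge_vert hab, H₂.edge_vert hab₂⟩
    ⟨H₁.edge_vert hab.symm, H₂.edge_vert hab₂.symm⟩)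

open Classical in
noncomputable def gluePaths (s : Set V) (P₁ P₂ : V → List V) (u v w : V) : List V :=
  if w = u then P₂ u ++ (P₁ v).tail else if w ∈ s then P₂ w else P₁ w

section gluePaths

variable {s : Set V} {P₁ P₂ : V → List V} {u v w : V}

theorem getLast?_gluePaths_eq_some (hu : u ∈ s) (hglue : (P₂ u).getLast? = (P₁ v).head?)
    {z : V} : (gluePaths s P₁ P₂ u v w).getLast? = some z ↔
      (w ∈ s ∧ w ≠ u ∧ (P₂ w).getLast? = some z) ∨ (w = u ∧ (P₁ v).getLast? = some z) ∨
        (w ∉ s ∧ (P₁ w).getLast? = some z) := by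
  unfold gluePaths
  split_ifs with hwu hws
  · subst hwu
    simp [List.getLast?_append_tail hglue, hu]
  · simp [hws, hwu]
  · simp [hws, hwu]

theorem mem_consecutivePairs_gluePaths (hu : u ∈ s)
    (hglue : (P₂ u).getLast? = (P₁ v).head?) {p : V × V} :
    p ∈ (gluePaths s P₁ P₂ u v w).consecutivePairs ↔
      (w ∈ s ∧ p ∈ (P₂ w).consecutivePairs) ∨ (w = u ∧ p ∈ (P₁ v).consecutivePairs) ∨
        (w ∉ s ∧ p ∈ (P₁ w).consecutivePairs) := by
  unfold gluePaths
  split_ifs with hwu hws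
  · subst hwu
    simp [List.consecutivePairs_append_tail hglue, hu]
  · simp [hws, hwu]
  · simp [hws, hwu]

end gluePaths

section IsOPPDC

variable {H₁ H₂ : G.Subgraph} {P₁ P₂ : V → List V} {u v : V}

theorem IsOPPDC.gluePaths_isChain_and_nodup_and_head? (h₁ : H₁.IsOPPDC P₁) (h₂ : H₂.IsOPPDC P₂)
    (hv : H₁.verts ∩ H₂.verts = {v}) (hu : u ∈ H₂.verts) (huv : (P₂ u).getLast? = some v)
    {w : V} (hw : w ∈ H₁.verts ∪ H₂.verts) :
    (gluePaths H₂.verts P₁ P₂ u v w).IsChain (H₁ ⊔ H₂).Adj ∧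
      (gluePaths H₂.verts P₁ P₂ u v w).Nodup ∧
        (gluePaths H₂.verts P₁ P₂ u v w).head? = some w := by
  have hv₁ : v ∈ H₁.verts := (Set.singleton_subset_iff.mp hv.ge).1
  have hglue : (P₂ u).getLast? = (P₁ v).head? := by rw [huv, h₁.head?_eq v hv₁]
  unfold gluePaths
  split_ifs with hwu hw₂
  · subst hwu
    refine ⟨((h₂.isChain w hu).imp fun _ _ => Or.inr).append_tail
      ((h₁.isChain v hv₁).imp fun _ _ => Or.inl) hglue,
      (h₂.nodup w hu).append_tail (h₁.nodup v hv₁) fun x hx₂ hx₁ => ?_,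
      by rw [List.head?_append_tail hglue, h₂.head?_eq w hu]⟩
    obtain rfl : x = v :=
      Set.eq_of_mem_singleton (hv ▸ ⟨h₁.mem_verts hv₁ hx₁, h₂.mem_verts hu hx₂⟩)
    exact h₁.head?_eq x hv₁
  · exact ⟨(h₂.isChain w hw₂).imp fun _ _ => Or.inr, h₂.nodup w hw₂, h₂.head?_eq w hw₂⟩
  · have hw₁ := hw.resolve_right hw₂
    exact ⟨(h₁.isChain w hw₁).imp fun _ _ => Or.inl, h₁.nodup w hw₁, h₁.head?_eq w hw₁⟩

theorem IsOPPDC.existsUnique_getLast?_gluePaths (h₁ : H₁.IsOPPDC P₁) (h₂ : H₂.IsOPPDC P₂)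
    (hv : H₁.verts ∩ H₂.verts = {v}) (hu : u ∈ H₂.verts) (huv : (P₂ u).getLast? = some v)
    {z : V} (hz : z ∈ H₁.verts ∪ H₂.verts) :
    ∃! w, w ∈ H₁.verts ∪ H₂.verts ∧ (gluePaths H₂.verts P₁ P₂ u v w).getLast? = some z := by
  have hv₁ : v ∈ H₁.verts := (Set.singleton_subset_iff.mp hv.ge).1
  have hglue : (P₂ u).getLast? = (P₁ v).head? := by rw [huv, h₁.head?_eq v hv₁]
  simp_rw [getLast?_gluePaths_eq_some hu hglue]
  by_cases hz₁ : z ∈ H₁.verts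
  · refine (existsUnique_congr fun w => and_congr_right fun _ => or_iff_right ?_).mpr
      (Set.existsUnique_replace_of_inter_eq_singleton hv hu (h₁.existsUnique_getLast? z hz₁))
    rintro ⟨hw₂, hwu, hend⟩
    obtain rfl : z = v :=
      Set.eq_of_mem_singleton (hv ▸ ⟨hz₁, h₂.mem_verts_of_getLast?_eq hw₂ hend⟩)
    exact hwu ((h₂.existsUnique_getLast? z (h₂.mem_verts_of_getLast?_eq hu huv)).unique
      ⟨hw₂, hend⟩ ⟨hu, huv⟩)
  · have hend₁ : ∀ w ∈ H₁.verts, (P₁ w).getLast? ≠ some z := fun w hw hend =>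
      hz₁ (h₁.mem_verts_of_getLast?_eq hw hend)
    refine (existsUnique_congr fun w => ⟨?_, ?_⟩).mpr
      (h₂.existsUnique_getLast? z (hz.resolve_left hz₁))
    · rintro ⟨hw, ⟨hw₂, -, hend⟩ | ⟨rfl, hend⟩ | ⟨hw₂, hend⟩⟩
      · exact ⟨hw₂, hend⟩
      · exact absurd hend (hend₁ v hv₁)
      · exact absurd hend (hend₁ w (hw.resolve_right hw₂))
    · rintro ⟨hw₂, hend⟩
      refine ⟨Or.inr hw₂, Or.inl ⟨hw₂, ?_, hend⟩⟩
      rintro rfl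
      exact hz₁ (Option.some_injective _ (huv.symm.trans hend) ▸ hv₁)

theorem IsOPPDC.existsUnique_mem_consecutivePairs_gluePaths (h₁ : H₁.IsOPPDC P₁)
    (h₂ : H₂.IsOPPDC P₂) (hv : H₁.verts ∩ H₂.verts = {v}) (hu : u ∈ H₂.verts)
    (huv : (P₂ u).getLast? = some v) {a b : V} (hab : (H₁ ⊔ H₂).Adj a b) :
    ∃! w, w ∈ H₁.verts ∪ H₂.verts ∧
      (a, b) ∈ (gluePaths H₂.verts P₁ P₂ u v w).consecutivePairs := by
  have hv₁ : v ∈ H₁.verts := (Set.singleton_subset_iff.mp hv.ge).1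
  have hglue : (P₂ u).getLast? = (P₁ v).head? := by rw [huv, h₁.head?_eq v hv₁]
  have hdisj : (H₁.verts ∩ H₂.verts).Subsingleton := hv ▸ Set.subsingleton_singleton
  simp_rw [mem_consecutivePairs_gluePaths hu hglue]
  rcases hab with hab₁ | hab₂
  · refine (existsUnique_congr fun w => and_congr_right fun _ => or_iff_right ?_).mpr
      (Set.existsUnique_replace_of_inter_eq_singleton hv hu
        (h₁.existsUnique_mem_consecutivePairs a b hab₁))
    rintro ⟨hw₂, hab₂⟩
    exact not_adj_of_adj_of_subsingleton_inter hdisj hab₁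
      (h₂.adj_of_mem_consecutivePairs hw₂ hab₂)
  · have hnot₁ : ∀ w ∈ H₁.verts, (a, b) ∉ (P₁ w).consecutivePairs := fun w hw hab₁ =>
      not_adj_of_adj_of_subsingleton_inter hdisj (h₁.adj_of_mem_consecutivePairs hw hab₁) hab₂
    refine (existsUnique_congr fun w => ⟨?_, fun hw => ⟨Or.inr hw.1, Or.inl hw⟩⟩).mpr
      (h₂.existsUnique_mem_consecutivePairs a b hab₂)
    rintro ⟨hw, hw₂ | ⟨rfl, hab₁⟩ | ⟨hw₂, hab₁⟩⟩
    · exact hw₂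
    · exact absurd hab₁ (hnot₁ v hv₁)
    · exact absurd hab₁ (hnot₁ w (hw.resolve_right hw₂))

theorem IsOPPDC.sup (h₁ : H₁.IsOPPDC P₁) (h₂ : H₂.IsOPPDC P₂)
    (hv : H₁.verts ∩ H₂.verts = {v}) : ∃ P, (H₁ ⊔ H₂).IsOPPDC P := by
  obtain ⟨u, ⟨hu, huv⟩, -⟩ :=
    h₂.existsUnique_getLast? v (Set.singleton_subset_iff.mp hv.ge).2
  exact ⟨gluePaths H₂.verts P₁ P₂ u v,
    { isChain := fun _ hw => (h₁.gluePaths_isChain_and_nodup_and_head? h₂ hv hu huv hw).1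
      nodup := fun _ hw => (h₁.gluePaths_isChain_and_nodup_and_head? h₂ hv hu huv hw).2.1
      head?_eq := fun _ hw => (h₁.gluePaths_isChain_and_nodup_and_head? h₂ hv hu huv hw).2.2
      existsUnique_getLast? := fun _ hz =>
        h₁.existsUnique_getLast?_gluePaths h₂ hv hu huv hz
      existsUnique_mem_consecutivePairs := fun _ _ hab =>
        h₁.existsUnique_mem_consecutivePairs_gluePaths h₂ hv hu huv hab }⟩

end IsOPPDC

end SimpleGraph.Subgraph

theorem union_one_vertex_hasOPPDC_general {V : Type*} (G : SimpleGraph V)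
    (H₁ H₂ : G.Subgraph) (v : V)
    (hverts : H₁.verts ∩ H₂.verts = {v})
    (hunion : H₁ ⊔ H₂ = ⊤)
    (h₁ : HasOPPDC H₁.coe) (h₂ : HasOPPDC H₂.coe) :
    HasOPPDC G := by
  obtain ⟨P₁, hP₁⟩ := h₁.exists_isOPPDC
  obtain ⟨P₂, hP₂⟩ := h₂.exists_isOPPDC
  obtain ⟨P, hP⟩ := hP₁.sup hP₂ hverts
  exact SimpleGraph.Subgraph.hasOPPDC_of_isOPPDC_top (hunion ▸ hP)

/-- if `G` is the union of two subgraphs sharing exactly one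
vertex `v`, each having an OPPDC, then `G` has an OPPDC. -/
theorem union_one_vertex_hasOPPDC {V : Type*} [Fintype V] (G : SimpleGraph V)
    (H₁ H₂ : G.Subgraph) (v : V)
    (hverts : H₁.verts ∩ H₂.verts = {v})
    (hunion : H₁ ⊔ H₂ = ⊤)
    (h₁ : HasOPPDC H₁.coe) (h₂ : HasOPPDC H₂.coe) :
    HasOPPDC G :=
  union_one_vertex_hasOPPDC_general G H₁ H₂ v hverts hunion h₁ h₂
end

section
/- If G is the union of two edge-disjoint graphs G₁ = G₂ = K₅ on disjoint vertex sets together with two additional edges uu' and vv', where u, v ∈ V(G₁) and u', v' ∈ V(G₂), then G has an oriented perfect path double cover. -/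
/-!
Permuting the vertices of each copy of K₅ is a graph isomorphism, and the symmetric group of a
set acts transitively on ordered pairs of distinct points, so we may take `u = u' = 0` and
`v = v' = 1`. Oriented perfect path double covers are transported along isomorphisms, and for
this one graph an explicit cover is verified by computation.
-/

namespace List

variable {α β : Type*}

theorem getLast?_map_equiv_eq_some_iff (e : α ≃ β) (l : List α) (b : β) :
    (l.map e).getLast? = some b ↔ l.getLast? = some (e.symm b) := by
  rw [getLast?_map, Option.map_eq_some_iff]
  exact ⟨fun ⟨a, ha, hab⟩ => by rwa [← hab, e.symm_apply_apply],
    fun h => ⟨_, h, by simp⟩⟩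

theorem mem_zip_tail_map_equiv_iff (e : α ≃ β) (l : List α) (a b : β) :
    (a, b) ∈ (l.map e).zip (l.map e).tail ↔ (e.symm a, e.symm b) ∈ l.zip l.tail := by
  rw [← map_tail, zip_map, mem_map]
  constructor
  · rintro ⟨⟨x, y⟩, hxy, h⟩
    simp only [Prod.map, Prod.mk.injEq] at h
    rwa [← h.1, ← h.2, e.symm_apply_apply, e.symm_apply_apply]
  · exact fun h => ⟨_, h, by simp⟩

end List

theorem HasOPPDC.of_iso {V W : Type*} {G : SimpleGraph V} {G' : SimpleGraph W} (e : G ≃g G')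
    (h : HasOPPDC G) : HasOPPDC G' := by
  obtain ⟨P, hpath, hend, harc⟩ := h
  obtain ⟨e, he⟩ := e
  refine ⟨fun w => (P (e.symm w)).map e, fun w => ?_, fun w => ?_, fun a b hab => ?_⟩
  · obtain ⟨hne, hnd, hchain, hhead⟩ := hpath (e.symm w)
    refine ⟨by simpa using hne, hnd.map e.injective, ?_, by simp [hhead]⟩
    exact List.isChain_map _ |>.2 <| hchain.imp fun _ _ => he.2
  · simpa only [List.getLast?_map_equiv_eq_some_iff] using
      e.existsUnique_congr_left.1 (hend (e.symm w))
  · simpa only [List.mem_zip_tail_map_equiv_iff] using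
      e.existsUnique_congr_left.1 (harc _ _ (he.1 (by simpa using hab)))

theorem Equiv.Perm.exists_apply_eq_and_apply_eq {α : Type*} [DecidableEq α] {x y a b : α}
    (hxy : x ≠ y) (hab : a ≠ b) : ∃ σ : Equiv.Perm α, σ x = a ∧ σ y = b := by
  set y' := Equiv.swap x a y
  have hy' : y' ≠ a := by simpa [y', Equiv.swap_apply_eq_iff] using hxy.symm
  refine ⟨(Equiv.swap x a).trans (Equiv.swap y' b), ?_, ?_⟩
  · simp [Equiv.swap_apply_of_ne_of_ne hy'.symm hab]
  · simp [y']

-- Core derives `BEq` for `Sum` without `LawfulBEq`; `decide` needs it for list membership.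
instance Sum.instLawfulBEq {α β : Type*} [BEq α] [LawfulBEq α] [BEq β] [LawfulBEq β] :
    LawfulBEq (α ⊕ β) where
  rfl {a} := by cases a <;> simp [BEq.beq, Sum.instBEq.beq]
  eq_of_beq {a b} h := by cases a <;> cases b <;> simp_all [BEq.beq, Sum.instBEq.beq]

def joinedCliquePair {α β : Type*} (u v : α) (u' v' : β) : SimpleGraph (α ⊕ β) :=
  SimpleGraph.fromRel fun a b =>
    (∃ x y, a = Sum.inl x ∧ b = Sum.inl y) ∨
    (∃ x y, a = Sum.inr x ∧ b = Sum.inr y) ∨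
    (a = Sum.inl u ∧ b = Sum.inr u') ∨
    (a = Sum.inl v ∧ b = Sum.inr v')

namespace joinedCliquePair

variable {α α' β β' : Type*}

instance [Fintype α] [DecidableEq α] [Fintype β] [DecidableEq β] (u v : α) (u' v' : β) :
    DecidableRel (joinedCliquePair u v u' v').Adj :=
  fun a b => decidable_of_iff' _ (SimpleGraph.fromRel_adj _ a b)

def congr (σ : α ≃ α') (τ : β ≃ β') (u v : α) (u' v' : β) :
    joinedCliquePair u v u' v' ≃g joinedCliquePair (σ u) (σ v) (τ u') (τ v') where
  toEquiv := σ.sumCongr τ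
  map_rel_iff' := by
    rintro (a | a) (b | b) <;> simp [joinedCliquePair]

end joinedCliquePair

-- Invariant under exchanging the two copies.
def finFivePathCover : Fin 5 ⊕ Fin 5 → List (Fin 5 ⊕ Fin 5)
  | .inl 0 => [.inl 0]
  | .inl 1 => [.inl 1, .inl 0, .inr 0, .inr 4, .inr 2, .inr 1, .inr 3]
  | .inl 2 => [.inl 2, .inl 0, .inl 3, .inl 4, .inl 1]
  | .inl 3 => [.inl 3, .inl 0, .inl 1, .inl 2, .inl 4]
  | .inl _ => [.inl 4, .inl 0, .inl 2, .inl 3, .inl 1, .inr 1, .inr 4, .inr 3, .inr 2]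
  | .inr 0 => [.inr 0]
  | .inr 1 => [.inr 1, .inr 0, .inl 0, .inl 4, .inl 2, .inl 1, .inl 3]
  | .inr 2 => [.inr 2, .inr 0, .inr 3, .inr 4, .inr 1]
  | .inr 3 => [.inr 3, .inr 0, .inr 1, .inr 2, .inr 4]
  | .inr _ => [.inr 4, .inr 0, .inr 2, .inr 3, .inr 1, .inl 1, .inl 4, .inl 3, .inl 2]

set_option synthInstance.maxSize 1000 in
theorem hasOPPDC_joinedCliquePair_fin_five :
    HasOPPDC (joinedCliquePair (0 : Fin 5) 1 (0 : Fin 5) 1) := by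
  refine ⟨finFivePathCover, ?_, ?_, ?_⟩
  · show ∀ v, _ ∧ _ ∧ (finFivePathCover v).IsChain _ ∧ _
    decide
  all_goals unfold ExistsUnique; decide

/-- two disjoint copies of K₅ joined by two edges `uu'` and `vv'`
(with `u ≠ v`, `u' ≠ v'`) has an OPPDC. -/
theorem K5_K5_two_edges (u v u' v' : Fin 5) (huv : u ≠ v) (huv' : u' ≠ v') :
    HasOPPDC (SimpleGraph.fromRel
      (fun a b : Fin 5 ⊕ Fin 5 =>
        (∃ x y : Fin 5, a = Sum.inl x ∧ b = Sum.inl y) ∨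
        (∃ x y : Fin 5, a = Sum.inr x ∧ b = Sum.inr y) ∨
        (a = Sum.inl u ∧ b = Sum.inr u') ∨
        (a = Sum.inl v ∧ b = Sum.inr v'))) := by
  obtain ⟨σ, rfl, rfl⟩ := Equiv.Perm.exists_apply_eq_and_apply_eq (zero_ne_one' (Fin 5)) huv
  obtain ⟨τ, rfl, rfl⟩ := Equiv.Perm.exists_apply_eq_and_apply_eq (zero_ne_one' (Fin 5)) huv'
  exact hasOPPDC_joinedCliquePair_fin_five.of_iso (joinedCliquePair.congr σ τ 0 1 0 1)
end

section
/- Let G₁ and G₂ be vertex-disjoint graphs each having an oriented perfect path double cover, and let G be obtained from G₁ ∪ G₂ by adding two vertex-disjoint edges uv and wx with u, w ∈ V(G₁) and v, x ∈ V(G₂). Then G has an oriented perfect path double cover. -/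
/-!
Take OPPDCs of `G₁` and `G₂` and extend the path ending at `u` by the arc `uv`, the one ending
at `v` by `vu`, and likewise for `w` and `x`. The ends of the paths are then permuted by the
involution `u ↔ v`, `w ↔ x`, so every vertex is still the end of exactly one path; each of the
four new arcs is used exactly once; and the extended paths stay simple because every original
path lies on one side while the new edges cross sides. The same works for any matching between
the two sides.
-/

namespace List
variable {α β : Type*}

theorem zip_tail_append_singleton {l : List α} {y : α} (hy : l.getLast? = some y) (c : α) :
    (l ++ [c]).zip (l ++ [c]).tail = l.zip l.tail ++ [(y, c)] := by
  induction l using twoStepInduction with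
  | nil => simp at hy
  | singleton a => simp_all
  | cons_cons => simp_all

theorem zip_tail_map (f : α → β) (l : List α) :
    (l.map f).zip (l.map f).tail = (l.zip l.tail).map (Prod.map f f) := by
  rw [← map_tail, zip_map]

theorem IsChain.rel_of_mem_zip_tail {R : α → α → Prop} {l : List α} (hl : l.IsChain R)
    {a b : α} (h : (a, b) ∈ l.zip l.tail) : R a b := by
  match l, hl, h with
  | x :: y :: t, hl, h =>
    rw [isChain_cons_cons] at hl
    simp only [tail_cons, zip_cons_cons, mem_cons, Prod.mk.injEq] at h
    rcases h with ⟨rfl, rfl⟩ | h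
    · exact hl.1
    · exact hl.2.rel_of_mem_zip_tail h

variable [DecidableEq α]

/-- `σ` is the partner map of a matching, unmatched vertices being its fixed points: a path `l`
ending at a matched vertex `y` is extended by the arc from `y` to its partner. -/
def extendToPartner (σ : α → α) (l : List α) (y : α) : List α :=
  if σ y = y then l else l ++ [σ y]

namespace extendToPartner
variable {σ : α → α} {l : List α} {y : α}

theorem ne_nil (hl : l ≠ []) : extendToPartner σ l y ≠ [] := by
  unfold extendToPartner; split_ifs <;> simp [hl]

theorem head?_eq (hl : l ≠ []) : (extendToPartner σ l y).head? = l.head? := by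
  unfold extendToPartner; split_ifs
  · rfl
  · exact List.head?_append_of_ne_nil l hl

theorem getLast?_eq (hy : l.getLast? = some y) :
    (extendToPartner σ l y).getLast? = some (σ y) := by
  unfold extendToPartner; split_ifs with h
  · rw [hy, h]
  · simp

theorem nodup (hl : l.Nodup) (hσ : σ y ≠ y → σ y ∉ l) : (extendToPartner σ l y).Nodup := by
  unfold extendToPartner; split_ifs with h
  · exact hl
  · rw [← List.concat_eq_append, List.nodup_concat]; exact ⟨hσ h, hl⟩

theorem isChain {R : α → α → Prop} (hl : l.IsChain R) (hy : l.getLast? = some y)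
    (hR : σ y ≠ y → R y (σ y)) : (extendToPartner σ l y).IsChain R := by
  unfold extendToPartner; split_ifs with h
  · exact hl
  · exact hl.append (List.isChain_singleton _) (by simpa [hy] using hR h)

theorem mem_zip_tail (hy : l.getLast? = some y) {a b : α} :
    (a, b) ∈ (extendToPartner σ l y).zip (extendToPartner σ l y).tail ↔
      (a, b) ∈ l.zip l.tail ∨ (σ y ≠ y ∧ a = y ∧ b = σ y) := by
  unfold extendToPartner; split_ifs with h
  · simp [h]
  · rw [List.zip_tail_append_singleton hy]; simp [h]

end extendToPartner

end List

theorem Sum.existsUnique_of_inl {α β : Type*} {p : α ⊕ β → Prop} (h : ∃! a, p (.inl a))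
    (hr : ∀ b, ¬p (.inr b)) : ∃! c, p c := by
  obtain ⟨a, ha, hu⟩ := h
  exact ⟨.inl a, ha, by rintro (a' | b') h'; exacts [congrArg _ (hu a' h'), absurd h' (hr b')]⟩

theorem Sum.existsUnique_of_inr {α β : Type*} {p : α ⊕ β → Prop} (hl : ∀ a, ¬p (.inl a))
    (h : ∃! b, p (.inr b)) : ∃! c, p c := by
  obtain ⟨b, hb, hu⟩ := h
  exact ⟨.inr b, hb, by rintro (a' | b') h'; exacts [absurd h' (hl a'), congrArg _ (hu b' h')]⟩

namespace SimpleGraph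

variable {V V₁ V₂ : Type*}

structure IsOPPDC (G : SimpleGraph V) (P : V → List V) : Prop where
  ne_nil : ∀ v, P v ≠ []
  nodup : ∀ v, (P v).Nodup
  isChain : ∀ v, (P v).IsChain G.Adj
  head?_eq : ∀ v, (P v).head? = some v
  existsUnique_getLast?_eq : ∀ w, ∃! v, (P v).getLast? = some w
  existsUnique_mem_zip_tail : ∀ a b, G.Adj a b → ∃! v, (a, b) ∈ (P v).zip (P v).tail

theorem _root_.hasOPPDC_iff {G : SimpleGraph V} : HasOPPDC G ↔ ∃ P, G.IsOPPDC P :=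
  exists_congr fun _ =>
    ⟨fun ⟨h, hl, ha⟩ => ⟨fun v => (h v).1, fun v => (h v).2.1, fun v => (h v).2.2.1,
      fun v => (h v).2.2.2, hl, ha⟩,
     fun h => ⟨fun v => ⟨h.ne_nil v, h.nodup v, h.isChain v, h.head?_eq v⟩,
      h.existsUnique_getLast?_eq, h.existsUnique_mem_zip_tail⟩⟩

theorem existsUnique_getLast?_eq_of_bijective {P : V → List V} {ℓ : V → V}
    (hℓ : Function.Bijective ℓ) (hP : ∀ v, (P v).getLast? = some (ℓ v)) (w : V) :
    ∃! v, (P v).getLast? = some w := by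
  simpa only [hP, Option.some_inj] using hℓ.existsUnique w

theorem exists_adj_iff_eq_of_adj_unique {M : SimpleGraph V}
    (hM : ∀ a b c, M.Adj a b → M.Adj a c → b = c) :
    ∃ σ : V → V, ∀ a b, M.Adj a b ↔ a ≠ b ∧ b = σ a := by
  classical
  refine ⟨fun a => if h : ∃ b, M.Adj a b then h.choose else a, fun a b => ⟨fun hab => ?_, ?_⟩⟩
  · have h : ∃ b, M.Adj a b := ⟨b, hab⟩
    dsimp only
    rw [dif_pos h]
    exact ⟨hab.ne, hM a b _ hab h.choose_spec⟩
  · rintro ⟨hne, rfl⟩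
    dsimp only at hne ⊢
    split_ifs at hne ⊢ with h
    · exact h.choose_spec
    · exact absurd rfl hne

theorem involutive_of_adj_iff {M : SimpleGraph V} {σ : V → V}
    (hMσ : ∀ a b, M.Adj a b ↔ a ≠ b ∧ b = σ a) : Function.Involutive σ := fun a => by
  by_cases h : σ a = a
  · rw [h, h]
  · exact ((hMσ _ _).1 ((hMσ a (σ a)).2 ⟨Ne.symm h, rfl⟩).symm).2.symm

theorem isLeft_eq_of_sum_adj {G₁ : SimpleGraph V₁} {G₂ : SimpleGraph V₂} {a b : V₁ ⊕ V₂}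
    (h : (G₁ ⊕g G₂).Adj a b) : a.isLeft = b.isLeft := by
  rcases a with a | a <;> rcases b with b | b <;> simp_all

namespace IsOPPDC

variable {G : SimpleGraph V} {P : V → List V}

theorem adj_of_mem_zip_tail (hP : G.IsOPPDC P) {v a b : V}
    (h : (a, b) ∈ (P v).zip (P v).tail) : G.Adj a b :=
  (hP.isChain v).rel_of_mem_zip_tail h

theorem exists_bijective_getLast?_eq (hP : G.IsOPPDC P) :
    ∃ ℓ : V → V, Function.Bijective ℓ ∧ ∀ v, (P v).getLast? = some (ℓ v) := by
  refine ⟨fun v => (P v).getLast (hP.ne_nil v), ?_, fun v => List.getLast?_eq_some_getLast _⟩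
  refine (Function.bijective_iff_existsUnique _).2 fun w => ?_
  simpa only [List.getLast?_eq_some_getLast (hP.ne_nil _), Option.some_inj]
    using hP.existsUnique_getLast?_eq w

theorem hasOPPDC_sup (hP : G.IsOPPDC P) {M : SimpleGraph V}
    (hM : ∀ a b c, M.Adj a b → M.Adj a c → b = c) (hGM : ∀ a b, M.Adj a b → ¬G.Adj a b)
    (hfresh : ∀ v y z, (P v).getLast? = some y → M.Adj y z → z ∉ P v) :
    HasOPPDC (G ⊔ M) := by
  classical
  obtain ⟨σ, hMσ⟩ := exists_adj_iff_eq_of_adj_unique hM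
  have hMσ' : ∀ {y}, σ y ≠ y → M.Adj y (σ y) := fun h => (hMσ _ _).2 ⟨Ne.symm h, rfl⟩
  obtain ⟨ℓ, hℓ, hPℓ⟩ := hP.exists_bijective_getLast?_eq
  refine hasOPPDC_iff.2 ⟨fun v => List.extendToPartner σ (P v) (ℓ v),
    ⟨fun v => List.extendToPartner.ne_nil (hP.ne_nil v),
     fun v => List.extendToPartner.nodup (hP.nodup v) fun h => hfresh v _ _ (hPℓ v) (hMσ' h),
     fun v => List.extendToPartner.isChain ((hP.isChain v).imp fun _ _ h => Or.inl h) (hPℓ v)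
       fun h => Or.inr (hMσ' h),
     fun v => (List.extendToPartner.head?_eq (hP.ne_nil v)).trans (hP.head?_eq v),
     existsUnique_getLast?_eq_of_bijective ((involutive_of_adj_iff hMσ).bijective.comp hℓ)
       fun v => List.extendToPartner.getLast?_eq (hPℓ v), ?_⟩⟩
  intro a b hab
  simp only [List.extendToPartner.mem_zip_tail (hPℓ _)]
  rcases hab with hG | hMab
  · obtain ⟨v, hv, hvu⟩ := hP.existsUnique_mem_zip_tail a b hG
    refine ⟨v, Or.inl hv, fun v' => ?_⟩
    rintro (h | ⟨hmoved, rfl, rfl⟩)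
    · exact hvu v' h
    · exact absurd hG (hGM _ _ (hMσ' hmoved))
  · obtain ⟨hab, rfl⟩ := (hMσ a b).1 hMab
    obtain ⟨v, rfl⟩ := hℓ.2 a
    refine ⟨v, Or.inr ⟨Ne.symm hab, rfl, rfl⟩, fun v' => ?_⟩
    rintro (h | ⟨-, h, -⟩)
    · exact absurd (hP.adj_of_mem_zip_tail h) (hGM _ _ hMab)
    · exact hℓ.1 h.symm

variable {G₁ : SimpleGraph V₁} {G₂ : SimpleGraph V₂} {P₁ : V₁ → List V₁} {P₂ : V₂ → List V₂}

theorem sum (hP₁ : G₁.IsOPPDC P₁) (hP₂ : G₂.IsOPPDC P₂) :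
    (G₁ ⊕g G₂).IsOPPDC (Sum.elim (fun p => (P₁ p).map .inl) (fun q => (P₂ q).map .inr)) where
  ne_nil := by rintro (p | q) <;> simp [hP₁.ne_nil, hP₂.ne_nil]
  nodup := by
    rintro (p | q)
    exacts [(hP₁.nodup p).map Sum.inl_injective, (hP₂.nodup q).map Sum.inr_injective]
  isChain := by
    rintro (p | q) <;> simp only [Sum.elim_inl, Sum.elim_inr, List.isChain_map, sum_adj]
    exacts [hP₁.isChain p, hP₂.isChain q]
  head?_eq := by rintro (p | q) <;> simp [hP₁.head?_eq, hP₂.head?_eq]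
  existsUnique_getLast?_eq := by
    obtain ⟨ℓ₁, hℓ₁, hP₁ℓ⟩ := hP₁.exists_bijective_getLast?_eq
    obtain ⟨ℓ₂, hℓ₂, hP₂ℓ⟩ := hP₂.exists_bijective_getLast?_eq
    refine existsUnique_getLast?_eq_of_bijective (ℓ := Sum.map ℓ₁ ℓ₂) (hℓ₁.sumMap hℓ₂) ?_
    rintro (p | q) <;> simp [hP₁ℓ, hP₂ℓ]
  existsUnique_mem_zip_tail := by
    rintro (a | a) (b | b) hab <;> simp only [sum_adj] at hab
    · refine Sum.existsUnique_of_inl ?_ ?_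
      · simpa [List.zip_tail_map] using hP₁.existsUnique_mem_zip_tail a b hab
      · simp [List.zip_tail_map]
    · refine Sum.existsUnique_of_inr ?_ ?_
      · simp [List.zip_tail_map]
      · simpa [List.zip_tail_map] using hP₂.existsUnique_mem_zip_tail a b hab

end IsOPPDC

theorem _root_.HasOPPDC.sum_sup {G₁ : SimpleGraph V₁} {G₂ : SimpleGraph V₂}
    (h₁ : HasOPPDC G₁) (h₂ : HasOPPDC G₂) {M : SimpleGraph (V₁ ⊕ V₂)}
    (hM : ∀ a b c, M.Adj a b → M.Adj a c → b = c)
    (hcross : ∀ a b, M.Adj a b → a.isLeft ≠ b.isLeft) : HasOPPDC ((G₁ ⊕g G₂) ⊔ M) := by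
  obtain ⟨P₁, hP₁⟩ := hasOPPDC_iff.1 h₁
  obtain ⟨P₂, hP₂⟩ := hasOPPDC_iff.1 h₂
  have hside : ∀ c (y : V₁ ⊕ V₂),
      y ∈ Sum.elim (fun p => (P₁ p).map Sum.inl) (fun q => (P₂ q).map Sum.inr) c →
      y.isLeft = c.isLeft := by
    rintro (p | q) y hy <;> obtain ⟨_, -, rfl⟩ := List.mem_map.1 hy <;> rfl
  refine (hP₁.sum hP₂).hasOPPDC_sup hM (fun a b hab hG => hcross a b hab (isLeft_eq_of_sum_adj hG))
    fun c y z hy hyz hz => hcross y z hyz ?_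
  exact (hside c y (List.mem_of_getLast? hy)).trans (hside c z hz).symm

end SimpleGraph

open SimpleGraph

theorem two_graphs_two_edges_general {V₁ V₂ : Type*}
    (G₁ : SimpleGraph V₁) (G₂ : SimpleGraph V₂)
    (h₁ : HasOPPDC G₁) (h₂ : HasOPPDC G₂)
    (u w : V₁) (v x : V₂) (huw : u ≠ w) (hvx : v ≠ x) :
    HasOPPDC (SimpleGraph.fromRel
      (fun a b : V₁ ⊕ V₂ =>
        (∃ p q : V₁, a = Sum.inl p ∧ b = Sum.inl q ∧ G₁.Adj p q) ∨
        (∃ p q : V₂, a = Sum.inr p ∧ b = Sum.inr q ∧ G₂.Adj p q) ∨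
        (a = Sum.inl u ∧ b = Sum.inr v) ∨
        (a = Sum.inl w ∧ b = Sum.inr x))) := by
  let M : SimpleGraph (V₁ ⊕ V₂) :=
    fromRel fun a b => (a = .inl u ∧ b = .inr v) ∨ (a = .inl w ∧ b = .inr x)
  have hmatching : ∀ a b c, M.Adj a b → M.Adj a c → b = c := by
    intro a b c hab hac
    simp only [M, fromRel_adj] at hab hac
    grind
  have hcross : ∀ a b, M.Adj a b → a.isLeft ≠ b.isLeft := by
    intro a b hab
    simp only [M, fromRel_adj] at hab
    grind
  convert h₁.sum_sup h₂ hmatching hcross using 1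
  ext (a | a) (b | b)
  · simpa [M, G₁.adj_comm b a] using fun h : G₁.Adj a b => h.ne
  · simp [M]
  · simp [M]
  · simpa [M, G₂.adj_comm b a] using fun h : G₂.Adj a b => h.ne

/-- two vertex-disjoint graphs each having an OPPDC, joined by two
vertex-disjoint edges `uv` and `wx`, give a graph with an OPPDC. -/
theorem two_graphs_two_edges {V₁ V₂ : Type*} [Fintype V₁] [Fintype V₂]
    (G₁ : SimpleGraph V₁) (G₂ : SimpleGraph V₂)
    (h₁ : HasOPPDC G₁) (h₂ : HasOPPDC G₂)
    (u w : V₁) (v x : V₂) (huw : u ≠ w) (hvx : v ≠ x) :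
    HasOPPDC (SimpleGraph.fromRel
      (fun a b : V₁ ⊕ V₂ =>
        (∃ p q : V₁, a = Sum.inl p ∧ b = Sum.inl q ∧ G₁.Adj p q) ∨
        (∃ p q : V₂, a = Sum.inr p ∧ b = Sum.inr q ∧ G₂.Adj p q) ∨
        (a = Sum.inl u ∧ b = Sum.inr v) ∨
        (a = Sum.inl w ∧ b = Sum.inr x))) :=
  two_graphs_two_edges_general G₁ G₂ h₁ h₂ u w v x huw hvx
end
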